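/- The function v₁(t) = ∫_ℝ dτ/√((1+τ²)(1+(t-τ)²)) satisfies lim_{t→+∞} v₁(t-r)/v₁(t) = 1 for any fixed r ≥ 0; consequently, for every r ≥ 0 there exists a constant c* > 0 such that v₁(t-α) ≤ c*·v₁(t) for all t > 0 and all α ∈ [0, r]. -/

import Mathlib

open MeasureTheory Filter

noncomputable def v1 (t : ℝ) : ℝ :=
  ∫ τ : ℝ, (Real.sqrt ((1 + τ ^ 2) * (1 + (t - τ) ^ 2)))⁻¹

/-!
Write `v1 t = ∫ w τ * w (t - τ)` with `w x = invBracket x = (1 + x²)^(-1/2)`. Peetre's inequality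
`w (x - α) ≤ √(1 + r + r²) * w x` for `0 ≤ α ≤ r` gives the comparison at once. For the limit,
`|w a - w b| ≤ |a - b| * w a * w b` bounds `|v1 (t - r) - v1 t|` by a multiple of
`∫ w τ * w (t - τ) ^ 2`; since one of `|τ|`, `|t - τ|` is at least `t / 2`, this integral is at most
`2 / t * (π + v1 t)`. Finally `v1 t ≥ log t / (2 (1 + t))`, so `t * v1 t → ∞` and the relative
difference `O(1 / (t * v1 t) + 1 / t)` tends to `0`.
-/

lemma sqrt_one_add_sq_pos (x : ℝ) : 0 < √(1 + x ^ 2) := Real.sqrt_pos.2 (by positivity)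

lemma abs_sqrt_one_add_sq_sub_le (a b : ℝ) : |√(1 + a ^ 2) - √(1 + b ^ 2)| ≤ |a - b| := by
  have abs_le_sqrt (x : ℝ) : |x| ≤ √(1 + x ^ 2) := by
    rw [← Real.sqrt_sq_eq_abs]
    exact Real.sqrt_le_sqrt (by linarith)
  have hsum : 0 < √(1 + a ^ 2) + √(1 + b ^ 2) := by
    linarith [sqrt_one_add_sq_pos a, sqrt_one_add_sq_pos b]
  have hprod : (√(1 + a ^ 2) - √(1 + b ^ 2)) * (√(1 + a ^ 2) + √(1 + b ^ 2))
      = (a - b) * (a + b) := by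
    linear_combination Real.sq_sqrt (by positivity : (0 : ℝ) ≤ 1 + a ^ 2)
      - Real.sq_sqrt (by positivity : (0 : ℝ) ≤ 1 + b ^ 2)
  refine le_of_mul_le_mul_right ?_ hsum
  calc |√(1 + a ^ 2) - √(1 + b ^ 2)| * (√(1 + a ^ 2) + √(1 + b ^ 2))
      = |a - b| * |a + b| := by rw [← abs_of_pos hsum, ← abs_mul, hprod, abs_mul]
    _ ≤ |a - b| * (√(1 + a ^ 2) + √(1 + b ^ 2)) := by
      gcongr
      exact (abs_add_le a b).trans (add_le_add (abs_le_sqrt a) (abs_le_sqrt b))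

noncomputable def invBracket (x : ℝ) : ℝ := (√(1 + x ^ 2))⁻¹

namespace invBracket

lemma pos (x : ℝ) : 0 < invBracket x := inv_pos.2 (sqrt_one_add_sq_pos x)

lemma le_one (x : ℝ) : invBracket x ≤ 1 :=
  inv_le_one_of_one_le₀ (Real.one_le_sqrt.2 (by nlinarith))

lemma sq_eq_inv (x : ℝ) : invBracket x ^ 2 = (1 + x ^ 2)⁻¹ := by
  rw [invBracket, inv_pow, Real.sq_sqrt (by positivity)]

@[fun_prop]
lemma _root_.continuous_invBracket : Continuous invBracket :=
  (Real.continuous_sqrt.comp (by fun_prop)).inv₀ fun x => (sqrt_one_add_sq_pos x).ne'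

lemma le_inv_of_le_abs {c x : ℝ} (hc : 0 < c) (h : c ≤ |x|) : invBracket x ≤ c⁻¹ := by
  refine inv_anti₀ hc (h.trans ?_)
  rw [← Real.sqrt_sq_eq_abs]
  exact Real.sqrt_le_sqrt (by linarith)

lemma inv_one_add_abs_le (x : ℝ) : (1 + |x|)⁻¹ ≤ invBracket x := by
  refine inv_anti₀ (sqrt_one_add_sq_pos x) ((Real.sqrt_le_left (by positivity)).2 ?_)
  nlinarith [sq_abs x, abs_nonneg x]

lemma le_mul_of_abs_le_abs_add {a b c : ℝ} (hc : 0 ≤ c) (h : |b| ≤ |a| + c) :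
    invBracket a ≤ √(1 + c + c ^ 2) * invBracket b := by
  -- `|b|² ≤ a² + 2|a|c + c²` and `2|a| ≤ 1 + a²`
  have hsq : 1 + b ^ 2 ≤ (1 + c + c ^ 2) * (1 + a ^ 2) := by
    nlinarith [sq_abs a, sq_abs b, abs_nonneg a, abs_nonneg b,
      mul_self_le_mul_self (abs_nonneg b) h,
      mul_nonneg hc (sq_nonneg (|a| - 1)), mul_nonneg (mul_nonneg hc hc) (sq_nonneg a)]
  have hroot : √(1 + b ^ 2) ≤ √(1 + c + c ^ 2) * √(1 + a ^ 2) := by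
    rw [← Real.sqrt_mul (by positivity)]
    exact Real.sqrt_le_sqrt hsq
  rw [invBracket, invBracket, ← div_eq_mul_inv, le_div_iff₀ (sqrt_one_add_sq_pos b),
    inv_mul_eq_div, div_le_iff₀ (sqrt_one_add_sq_pos a)]
  linarith

lemma abs_sub_le_abs_sub_mul (a b : ℝ) :
    |invBracket a - invBracket b| ≤ |a - b| * (invBracket a * invBracket b) := by
  have ha := sqrt_one_add_sq_pos a
  have hb := sqrt_one_add_sq_pos b
  have heq : invBracket a - invBracket b
      = (√(1 + b ^ 2) - √(1 + a ^ 2)) * (invBracket a * invBracket b) := by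
    simp only [invBracket]; field_simp
  rw [heq, abs_mul, abs_of_pos (mul_pos (pos a) (pos b)), abs_sub_comm a b]
  exact mul_le_mul_of_nonneg_right (abs_sqrt_one_add_sq_sub_le b a)
    (mul_pos (pos a) (pos b)).le

end invBracket

open invBracket

lemma v1_eq_integral (t : ℝ) : v1 t = ∫ τ, invBracket τ * invBracket (t - τ) := by
  simp only [v1, invBracket, Real.sqrt_mul (by positivity : (0 : ℝ) ≤ 1 + _ ^ 2), mul_inv]

lemma integrable_invBracket_mul_invBracket_sub (t : ℝ) :
    Integrable fun τ => invBracket τ * invBracket (t - τ) := by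
  refine (integrable_inv_one_add_sq.const_mul √(1 + |t| + |t| ^ 2)).mono'
    (by fun_prop : Continuous _).aestronglyMeasurable (Eventually.of_forall fun τ => ?_)
  have hpeetre : invBracket (t - τ) ≤ √(1 + |t| + |t| ^ 2) * invBracket τ := by
    refine le_mul_of_abs_le_abs_add (abs_nonneg t) ?_
    simpa [add_comm] using abs_sub t (t - τ)
  calc ‖invBracket τ * invBracket (t - τ)‖
      = invBracket τ * invBracket (t - τ) := Real.norm_of_nonneg (mul_pos (pos τ) (pos _)).le
    _ ≤ invBracket τ * (√(1 + |t| + |t| ^ 2) * invBracket τ) := by gcongr; exact (pos τ).le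
    _ = √(1 + |t| + |t| ^ 2) * (1 + τ ^ 2)⁻¹ := by rw [← sq_eq_inv]; ring

lemma integrable_invBracket_mul_invBracket_sub_sq (t : ℝ) :
    Integrable fun τ => invBracket τ * invBracket (t - τ) ^ 2 := by
  refine (integrable_invBracket_mul_invBracket_sub t).mono'
    (by fun_prop : Continuous _).aestronglyMeasurable (Eventually.of_forall fun τ => ?_)
  rw [Real.norm_of_nonneg (mul_pos (pos τ) (pow_pos (pos _) 2)).le, sq, ← mul_assoc]
  exact mul_le_of_le_one_right (mul_pos (pos τ) (pos _)).le (le_one _)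

lemma v1_pos (t : ℝ) : 0 < v1 t := by
  rw [v1_eq_integral]
  exact integral_pos_of_integrable_nonneg_nonzero (x := 0) (by fun_prop)
    (integrable_invBracket_mul_invBracket_sub t) (fun τ => (mul_pos (pos τ) (pos _)).le)
    (mul_pos (pos 0) (pos _)).ne'

lemma invBracket_sub_le {r α : ℝ} (hα : 0 ≤ α) (hαr : α ≤ r) (x : ℝ) :
    invBracket (x - α) ≤ √(1 + r + r ^ 2) * invBracket x := by
  refine le_mul_of_abs_le_abs_add (hα.trans hαr) ?_
  calc |x| = |(x - α) + α| := by rw [sub_add_cancel]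
    _ ≤ |x - α| + α := (abs_add_le _ _).trans_eq (by rw [abs_of_nonneg hα])
    _ ≤ |x - α| + r := by gcongr

lemma v1_sub_le {r α : ℝ} (hα : 0 ≤ α) (hαr : α ≤ r) (t : ℝ) :
    v1 (t - α) ≤ √(1 + r + r ^ 2) * v1 t := by
  rw [v1_eq_integral, v1_eq_integral, ← integral_const_mul]
  refine integral_mono (integrable_invBracket_mul_invBracket_sub _)
    ((integrable_invBracket_mul_invBracket_sub t).const_mul _) fun τ => ?_
  dsimp only
  rw [sub_right_comm, mul_left_comm]
  exact mul_le_mul_of_nonneg_left (invBracket_sub_le hα hαr _) (pos τ).le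

lemma abs_v1_sub_sub_v1_le {r : ℝ} (hr : 0 ≤ r) (t : ℝ) :
    |v1 (t - r) - v1 t|
      ≤ r * √(1 + r + r ^ 2) * ∫ τ, invBracket τ * invBracket (t - τ) ^ 2 := by
  rw [v1_eq_integral, v1_eq_integral, ← integral_sub (integrable_invBracket_mul_invBracket_sub _)
    (integrable_invBracket_mul_invBracket_sub t), ← integral_const_mul, ← Real.norm_eq_abs]
  refine (norm_integral_le_integral_norm _).trans <| integral_mono
    ((integrable_invBracket_mul_invBracket_sub _).sub
      (integrable_invBracket_mul_invBracket_sub t)).norm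
    ((integrable_invBracket_mul_invBracket_sub_sq t).const_mul _) fun τ => ?_
  set x := t - τ
  have hx : t - r - τ = x - r := sub_right_comm t r τ
  calc ‖invBracket τ * invBracket (t - r - τ) - invBracket τ * invBracket x‖
      = invBracket τ * |invBracket (x - r) - invBracket x| := by
        rw [hx, ← mul_sub, Real.norm_eq_abs, abs_mul, abs_of_pos (pos τ)]
    _ ≤ invBracket τ * (r * (invBracket (x - r) * invBracket x)) := by
        refine mul_le_mul_of_nonneg_left ?_ (pos τ).le
        simpa [abs_of_nonneg hr] using abs_sub_le_abs_sub_mul (x - r) x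
    _ ≤ invBracket τ * (r * ((√(1 + r + r ^ 2) * invBracket x) * invBracket x)) := by
        have hpeetre := invBracket_sub_le hr le_rfl x
        have hτ := pos τ
        have hx := pos x
        gcongr
    _ = r * √(1 + r + r ^ 2) * (invBracket τ * invBracket x ^ 2) := by ring

lemma integral_invBracket_sub_sq (t : ℝ) : ∫ τ, invBracket (t - τ) ^ 2 = Real.pi := by
  simp only [sq_eq_inv]
  rw [integral_sub_left_eq_self (fun x => (1 + x ^ 2)⁻¹) volume t, integral_univ_inv_one_add_sq]

lemma invBracket_mul_invBracket_sub_sq_le {t : ℝ} (ht : 0 < t) (τ : ℝ) :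
    invBracket τ * invBracket (t - τ) ^ 2
      ≤ 2 / t * (invBracket (t - τ) ^ 2 + invBracket τ * invBracket (t - τ)) := by
  have hprod : 0 ≤ invBracket τ * invBracket (t - τ) := (mul_pos (pos τ) (pos _)).le
  have ht2 : 0 < t / 2 := half_pos ht
  have h2t : 0 ≤ 2 / t := by positivity
  rcases le_total (t / 2) |τ| with hnear | hfar
  · have hτ := le_inv_of_le_abs ht2 hnear
    rw [inv_div] at hτ
    nlinarith [mul_le_mul_of_nonneg_right hτ (sq_nonneg (invBracket (t - τ))),
      mul_nonneg h2t hprod]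
  · have hx : t / 2 ≤ |t - τ| := by
      have := abs_sub_abs_le_abs_sub t τ
      rw [abs_of_pos ht] at this
      linarith
    have hx := le_inv_of_le_abs ht2 hx
    rw [inv_div] at hx
    nlinarith [mul_le_mul_of_nonneg_left hx hprod,
      mul_nonneg h2t (sq_nonneg (invBracket (t - τ)))]

lemma integral_invBracket_mul_invBracket_sub_sq_le {t : ℝ} (ht : 0 < t) :
    ∫ τ, invBracket τ * invBracket (t - τ) ^ 2 ≤ 2 / t * (Real.pi + v1 t) := by
  have hsq : Integrable fun τ => invBracket (t - τ) ^ 2 := by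
    simpa only [sq_eq_inv] using integrable_inv_one_add_sq.comp_sub_left t
  calc ∫ τ, invBracket τ * invBracket (t - τ) ^ 2
      ≤ ∫ τ, 2 / t * (invBracket (t - τ) ^ 2 + invBracket τ * invBracket (t - τ)) :=
        integral_mono (integrable_invBracket_mul_invBracket_sub_sq t)
          ((hsq.add (integrable_invBracket_mul_invBracket_sub t)).const_mul _)
          (invBracket_mul_invBracket_sub_sq_le ht)
    _ = 2 / t * (Real.pi + v1 t) := by
        rw [integral_const_mul, integral_add hsq (integrable_invBracket_mul_invBracket_sub t),
          integral_invBracket_sub_sq, v1_eq_integral]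

lemma log_div_le_v1 {t : ℝ} (ht : 1 ≤ t) : Real.log t / (2 * (1 + t)) ≤ v1 t := by
  have ht0 : 0 < t := one_pos.trans_le ht
  have hint := integrable_invBracket_mul_invBracket_sub t
  calc Real.log t / (2 * (1 + t))
      = ∫ τ in (1 : ℝ)..t, (2 * (1 + t))⁻¹ * τ⁻¹ := by
        rw [intervalIntegral.integral_const_mul, integral_inv_of_pos one_pos ht0, div_one,
          div_eq_inv_mul]
    _ ≤ ∫ τ in (1 : ℝ)..t, invBracket τ * invBracket (t - τ) := by
        refine intervalIntegral.integral_mono_on ht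
          ((intervalIntegral.intervalIntegrable_inv (fun τ hτ => ?_) continuousOn_id).const_mul _)
          hint.intervalIntegrable fun τ ⟨h1τ, hτt⟩ => ?_
        · rw [Set.uIcc_of_le ht] at hτ
          exact (one_pos.trans_le hτ.1).ne'
        have hτ0 : 0 < τ := one_pos.trans_le h1τ
        have hτ : (2 * τ)⁻¹ ≤ invBracket τ := by
          refine le_trans ?_ (inv_one_add_abs_le τ)
          rw [abs_of_pos hτ0]
          exact inv_anti₀ (by positivity) (by linarith)
        have hx : (1 + t)⁻¹ ≤ invBracket (t - τ) := by
          refine le_trans ?_ (inv_one_add_abs_le _)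
          rw [abs_of_nonneg (sub_nonneg.2 hτt)]
          exact inv_anti₀ (by positivity) (by linarith)
        calc (2 * (1 + t))⁻¹ * τ⁻¹ = (2 * τ)⁻¹ * (1 + t)⁻¹ := by rw [mul_inv, mul_inv]; ring
          _ ≤ invBracket τ * invBracket (t - τ) :=
            mul_le_mul hτ hx (by positivity) (pos τ).le
    _ ≤ v1 t := by
        rw [v1_eq_integral, intervalIntegral.integral_of_le ht]
        exact setIntegral_le_integral hint
          (Eventually.of_forall fun τ => (mul_pos (pos τ) (pos _)).le)

lemma tendsto_mul_v1_atTop : Tendsto (fun t => t * v1 t) atTop atTop := by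
  refine tendsto_atTop_mono' atTop ?_
    (Real.tendsto_log_atTop.atTop_div_const (by norm_num : (0 : ℝ) < 4))
  filter_upwards [eventually_ge_atTop (1 : ℝ)] with t ht
  have hlog := Real.log_nonneg ht
  calc Real.log t / 4 ≤ t * (Real.log t / (2 * (1 + t))) := by
        rw [mul_div_assoc', div_le_div_iff₀ (by norm_num) (by positivity)]
        nlinarith [mul_nonneg hlog (sub_nonneg.2 ht)]
    _ ≤ t * v1 t := mul_le_mul_of_nonneg_left (log_div_le_v1 ht) (by linarith)

lemma tendsto_v1_sub_div_v1 {r : ℝ} (hr : 0 ≤ r) :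
    Tendsto (fun t => v1 (t - r) / v1 t) atTop (nhds 1) := by
  set K := √(1 + r + r ^ 2)
  rw [tendsto_iff_norm_sub_tendsto_zero]
  refine squeeze_zero_norm' (a := fun t => 2 * r * K * (Real.pi * (t * v1 t)⁻¹ + t⁻¹)) ?_ ?_
  · filter_upwards [eventually_gt_atTop (0 : ℝ)] with t ht
    have hv := v1_pos t
    rw [norm_norm, Real.norm_eq_abs, div_sub_one hv.ne', abs_div, abs_of_pos hv, div_le_iff₀ hv]
    calc |v1 (t - r) - v1 t| ≤ r * K * (2 / t * (Real.pi + v1 t)) :=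
          (abs_v1_sub_sub_v1_le hr t).trans <| mul_le_mul_of_nonneg_left
            (integral_invBracket_mul_invBracket_sub_sq_le ht) (by positivity)
      _ = 2 * r * K * (Real.pi * (t * v1 t)⁻¹ + t⁻¹) * v1 t := by field_simp
  · simpa using ((tendsto_mul_v1_atTop.inv_tendsto_atTop.const_mul Real.pi).add
      tendsto_inv_atTop_zero).const_mul (2 * r * K)

theorem v1_ratio_limit_and_comparison :
    (∀ r : ℝ, 0 ≤ r → Tendsto (fun t => v1 (t - r) / v1 t) atTop (nhds 1)) ∧
    (∀ r : ℝ, 0 ≤ r → ∃ c : ℝ, 0 < c ∧ ∀ t : ℝ, 0 < t →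
      ∀ α ∈ Set.Icc (0 : ℝ) r, v1 (t - α) ≤ c * v1 t) :=
  ⟨fun _ hr => tendsto_v1_sub_div_v1 hr, fun r _ =>
    ⟨√(1 + r + r ^ 2), Real.sqrt_pos.2 (by positivity), fun t _ _ hα => v1_sub_le hα.1 hα.2 t⟩⟩
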